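/- Define T(n,t) = (1/(t·n!))·∑_{i=1}^{n−1} i·i!·( ∏_{r=i}^{n−1}(1+r·t) + ∑_{k=1}^{i−1} (k/(k+1))·∏_{r=k}^{n−1}(1+r·t) ). If t = t(n) satisfies t(n) > 0 and t(n) = O(1/n²), then T(n,t(n)) = Θ(n/t(n)). -/

import Mathlib

/-!
Write `P k = ∏_{r=k}^{n-1} (1 + r t)`. Every such product lies between `1` and
`exp (∑ r t) ≤ exp (n² t)`, so each bracket `P i + ∑_{k<i} k/(k+1) · P k` lies between `(i+1)/2`
and `i · exp (n² t)`. Together with `∑_{i<n} i · i! = n! - 1` this gives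
`T(n,t) ≤ exp (n² t) · n / t`, while the single summand `i = n - 1` already gives
`T(n,t) ≥ (n-1)/(2t)`. When `n² t(n)` is bounded both bounds are of order `n / t(n)`.
-/

open Filter Asymptotics

/-- Exact expected optimization time of BACO on Sorting with `n` keys and pheromone ratio `t`. -/
noncomputable def Tsort (n : ℕ) (t : ℝ) : ℝ :=
  (1 / (t * (Nat.factorial n : ℝ))) *
    ∑ i ∈ Finset.Icc 1 (n - 1),
      (i : ℝ) * (Nat.factorial i : ℝ) *
        ((∏ r ∈ Finset.Icc i (n - 1), (1 + (r : ℝ) * t)) +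
          ∑ k ∈ Finset.Icc 1 (i - 1),
            ((k : ℝ) / ((k : ℝ) + 1)) * ∏ r ∈ Finset.Icc k (n - 1), (1 + (r : ℝ) * t))

open Finset Real
open scoped Nat

lemma Nat.sum_range_mul_factorial_add_one (n : ℕ) : ∑ i ∈ range n, i * i ! + 1 = n ! := by
  induction n with
  | zero => rfl
  | succ n ih => rw [sum_range_succ, Nat.factorial_succ, ← ih]; ring

lemma sum_Icc_mul_factorial_le (n : ℕ) : ∑ i ∈ Icc 1 (n - 1), (i : ℝ) * i ! ≤ n ! := by
  have hsub : Icc 1 (n - 1) ⊆ range n := fun i hi => by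
    simp only [mem_Icc, mem_range] at hi ⊢; omega
  calc ∑ i ∈ Icc 1 (n - 1), (i : ℝ) * i ! ≤ ∑ i ∈ range n, (i : ℝ) * i ! :=
        sum_le_sum_of_subset_of_nonneg hsub fun _ _ _ => by positivity
    _ ≤ n ! := by
        rw [← Nat.sum_range_mul_factorial_add_one n]
        push_cast
        linarith

lemma one_le_prod_one_add_mul (s : Finset ℕ) {t : ℝ} (ht : 0 ≤ t) :
    1 ≤ ∏ r ∈ s, (1 + (r : ℝ) * t) :=
  one_le_prod fun _ _ => le_add_of_nonneg_right (by positivity)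

lemma prod_one_add_mul_le_exp {s : Finset ℕ} {n : ℕ} (hs : s ⊆ range n) {t : ℝ} (ht : 0 ≤ t) :
    ∏ r ∈ s, (1 + (r : ℝ) * t) ≤ exp ((n : ℝ) ^ 2 * t) := by
  refine (prod_one_add_le_exp_sum s fun _ => by positivity).trans (exp_le_exp.2 ?_)
  have hr : ∀ r ∈ s, (r : ℝ) * t ≤ n * t := fun r hr => by
    gcongr
    exact_mod_cast (mem_range.1 (hs hr)).le
  have hcard : (s.card : ℝ) ≤ n := by exact_mod_cast (card_le_card hs).trans (card_range n).le
  calc ∑ r ∈ s, (r : ℝ) * t ≤ s.card * (n * t) := by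
        simpa using sum_le_card_nsmul s _ _ hr
    _ ≤ n * (n * t) := by gcongr
    _ = (n : ℝ) ^ 2 * t := by ring

namespace Tsort

noncomputable def tailProd (n : ℕ) (t : ℝ) (k : ℕ) : ℝ := ∏ r ∈ Icc k (n - 1), (1 + (r : ℝ) * t)

noncomputable def bracket (P : ℕ → ℝ) (i : ℕ) : ℝ := P i + ∑ k ∈ Icc 1 (i - 1), (k : ℝ) / (k + 1) * P k

lemma eq_sum_bracket (n : ℕ) (t : ℝ) :
    Tsort n t = 1 / (t * n !) * ∑ i ∈ Icc 1 (n - 1), (i : ℝ) * i ! * bracket (tailProd n t) i :=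
  rfl

lemma one_le_tailProd (n : ℕ) {t : ℝ} (ht : 0 ≤ t) (k : ℕ) : 1 ≤ tailProd n t k :=
  one_le_prod_one_add_mul _ ht

lemma tailProd_le_exp {n k : ℕ} (hk : 1 ≤ k) {t : ℝ} (ht : 0 ≤ t) :
    tailProd n t k ≤ exp ((n : ℝ) ^ 2 * t) :=
  prod_one_add_mul_le_exp (fun r hr => by simp only [mem_Icc, mem_range] at hr ⊢; omega) ht

section Bracket

variable (P : ℕ → ℝ)

lemma succ_div_two_le_bracket (hP : ∀ k, 1 ≤ P k) (i : ℕ) : ((i : ℝ) + 1) / 2 ≤ bracket P i := by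
  have hterm : ∀ k ∈ Icc 1 (i - 1), (1 / 2 : ℝ) ≤ (k : ℝ) / (k + 1) * P k := fun k hk => by
    have hk : (1 : ℝ) ≤ k := by exact_mod_cast (mem_Icc.1 hk).1
    have hhalf : (1 / 2 : ℝ) ≤ (k : ℝ) / (k + 1) := by
      rw [le_div_iff₀ (by positivity)]; linarith
    nlinarith [hP k]
  have hsum := card_nsmul_le_sum _ _ _ hterm
  rw [Nat.card_Icc, nsmul_eq_mul, Nat.add_sub_cancel] at hsum
  have hcast : (i : ℝ) - 1 ≤ ((i - 1 : ℕ) : ℝ) := by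
    rcases Nat.eq_zero_or_pos i with rfl | hi
    · simp
    · rw [Nat.cast_sub hi, Nat.cast_one]
  unfold bracket
  nlinarith [hP i]

lemma bracket_le_mul {M : ℝ} (hP0 : ∀ k, 0 ≤ P k) {i : ℕ} (hi : 1 ≤ i)
    (hPM : ∀ k ∈ Icc 1 i, P k ≤ M) : bracket P i ≤ i * M := by
  have hterm : ∀ k ∈ Icc 1 (i - 1), (k : ℝ) / (k + 1) * P k ≤ M := fun k hk => by
    have hk : k ∈ Icc 1 i := by simp only [mem_Icc] at hk ⊢; omega
    have hfrac : (k : ℝ) / (k + 1) ≤ 1 := by rw [div_le_one (by positivity)]; linarith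
    calc (k : ℝ) / (k + 1) * P k ≤ 1 * M :=
          mul_le_mul hfrac (hPM k hk) (hP0 k) zero_le_one
      _ = M := one_mul M
  have hsum := sum_le_card_nsmul _ _ _ hterm
  rw [Nat.card_Icc, nsmul_eq_mul, Nat.add_sub_cancel, Nat.cast_sub hi, Nat.cast_one] at hsum
  unfold bracket
  linarith [hPM i (mem_Icc.2 ⟨hi, le_rfl⟩)]

end Bracket

lemma le_exp_mul_div (n : ℕ) {t : ℝ} (ht : 0 < t) :
    Tsort n t ≤ exp ((n : ℝ) ^ 2 * t) * (n / t) := by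
  set M := exp ((n : ℝ) ^ 2 * t)
  have hbracket : ∀ i ∈ Icc 1 (n - 1), bracket (tailProd n t) i ≤ n * M := fun i hi => by
    obtain ⟨hi1, hin⟩ := mem_Icc.1 hi
    calc bracket (tailProd n t) i ≤ i * M :=
          bracket_le_mul _ (fun k => zero_le_one.trans (one_le_tailProd n ht.le k)) hi1
            fun k hk => tailProd_le_exp (mem_Icc.1 hk).1 ht.le
      _ ≤ n * M := by gcongr; exact_mod_cast hin.trans (Nat.sub_le n 1)
  have hsum : ∑ i ∈ Icc 1 (n - 1), (i : ℝ) * i ! * bracket (tailProd n t) i ≤ n ! * (n * M) :=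
    calc _ ≤ ∑ i ∈ Icc 1 (n - 1), (i : ℝ) * i ! * (n * M) :=
          sum_le_sum fun i hi => by gcongr; exact hbracket i hi
      _ = (∑ i ∈ Icc 1 (n - 1), (i : ℝ) * i !) * (n * M) := by rw [sum_mul]
      _ ≤ n ! * (n * M) := by gcongr; exact sum_Icc_mul_factorial_le n
  have hfac : (0 : ℝ) < n ! := by positivity
  calc Tsort n t ≤ 1 / (t * n !) * (n ! * (n * M)) := by
        rw [eq_sum_bracket]; gcongr
    _ = M * (n / t) := by field_simp

lemma div_le_four_mul {n : ℕ} (hn : 2 ≤ n) {t : ℝ} (ht : 0 < t) : n / t ≤ 4 * Tsort n t := by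
  have hbracket : ∀ i : ℕ, ((i : ℝ) + 1) / 2 ≤ bracket (tailProd n t) i :=
    succ_div_two_le_bracket _ (one_le_tailProd n ht.le)
  have hterm_nonneg : ∀ i ∈ Icc 1 (n - 1), 0 ≤ (i : ℝ) * i ! * bracket (tailProd n t) i :=
    fun i _ => mul_nonneg (by positivity) ((by positivity : (0 : ℝ) ≤ ((i : ℝ) + 1) / 2).trans (hbracket i))
  have hn2 : (2 : ℝ) ≤ n := by exact_mod_cast hn
  have hcast : ((n - 1 : ℕ) : ℝ) = n - 1 := by rw [Nat.cast_sub (by omega), Nat.cast_one]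
  have hlast : ((n : ℝ) - 1) * (n - 1) ! * (n / 2) ≤
      ∑ i ∈ Icc 1 (n - 1), (i : ℝ) * i ! * bracket (tailProd n t) i := by
    refine le_trans ?_ (single_le_sum hterm_nonneg (mem_Icc.2 ⟨by omega, le_rfl⟩))
    have hb := hbracket (n - 1)
    rw [hcast, sub_add_cancel] at hb
    rw [hcast]
    gcongr
    exact mul_nonneg (by linarith) (by positivity)
  have hfac : (n ! : ℝ) = n * (n - 1) ! := by
    rw [← Nat.mul_factorial_pred (by omega : n ≠ 0)]; push_cast; ring
  have hfac_pos : (0 : ℝ) < (n - 1) ! := by positivity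
  calc (n : ℝ) / t ≤ 4 * (1 / (t * n !) * (((n : ℝ) - 1) * (n - 1) ! * (n / 2))) := by
        rw [hfac, div_le_iff₀ ht]
        field_simp
        nlinarith
    _ ≤ 4 * Tsort n t := by
        rw [eq_sum_bracket]; gcongr

end Tsort

lemma exists_sq_mul_le_of_isBigO {f : ℕ → ℝ} (h : f =O[atTop] fun n : ℕ => 1 / (n : ℝ) ^ 2) :
    ∃ c, ∀ᶠ n : ℕ in atTop, (n : ℝ) ^ 2 * f n ≤ c := by
  obtain ⟨c, hc⟩ := h.bound
  refine ⟨c, ?_⟩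
  filter_upwards [hc, eventually_ne_atTop 0] with n hn hn0
  have hpos : (0 : ℝ) < (n : ℝ) ^ 2 := by positivity
  rw [norm_div, norm_one, norm_pow, RCLike.norm_natCast, ← div_eq_mul_one_div,
    le_div_iff₀ hpos, Real.norm_eq_abs] at hn
  nlinarith [le_abs_self (f n)]

theorem sorting_time_theta_small_t (t : ℕ → ℝ) (ht : ∀ n, 0 < t n)
    (hsmall : t =O[atTop] fun n : ℕ => 1 / (n : ℝ) ^ 2) :
    (fun n : ℕ => Tsort n (t n)) =Θ[atTop] fun n : ℕ => (n : ℝ) / t n := by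
  obtain ⟨c, hc⟩ := exists_sq_mul_le_of_isBigO hsmall
  have hratio_nonneg : ∀ n : ℕ, 0 ≤ (n : ℝ) / t n := fun n => div_nonneg n.cast_nonneg (ht n).le
  have hT_nonneg : ∀ n, 2 ≤ n → 0 ≤ Tsort n (t n) := fun n hn => by
    linarith [hratio_nonneg n, Tsort.div_le_four_mul hn (ht n)]
  refine ⟨.of_bound (exp c) ?_, .of_bound 4 ?_⟩
  · filter_upwards [hc, eventually_ge_atTop 2] with n hcn hn
    rw [norm_of_nonneg (hT_nonneg n hn), norm_of_nonneg (hratio_nonneg n)]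
    exact (Tsort.le_exp_mul_div n (ht n)).trans (by gcongr; exact hratio_nonneg n)
  · filter_upwards [eventually_ge_atTop 2] with n hn
    rw [norm_of_nonneg (hT_nonneg n hn), norm_of_nonneg (hratio_nonneg n)]
    exact Tsort.div_le_four_mul hn (ht n)
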